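/- arXiv:1802.03637 — 3 statements merged into one kernel-verified Lean document; each statement's English description precedes it below -/
import Mathlib

section
/- For every graph G and every vertex v of G, the game total domination number of G with v predominated satisfies γ_g^t(G|v) ≥ γ_g^t(G) − 2. -/
open Finset

open scoped Classical

variable {V : Type*} [Fintype V]

/-- The set of neighbors of `v` (the vertices that `v` totally dominates). -/
noncomputable def nbr (G : SimpleGraph V) (v : V) : Finset V :=
  Finset.univ.filter (G.Adj v)

/-- The legal moves, given that the vertices of `D` are already totally dominated:
a vertex is playable iff it totally dominates at least one vertex outside `D`. -/
noncomputable def movesF (G : SimpleGraph V) (D : Finset V) : Finset V :=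
  Finset.univ.filter fun v => ¬ nbr G v ⊆ D

lemma movesF_card (G : SimpleGraph V) (D : Finset V) {v : V} (hv : v ∈ movesF G D) :
    ((univ : Finset V) \ (D ∪ nbr G v)).card < ((univ : Finset V) \ D).card := by
  simp only [movesF, mem_filter] at hv
  obtain ⟨u, hu, hu2⟩ := Finset.not_subset.mp hv.2
  apply Finset.card_lt_card
  constructor
  · exact Finset.sdiff_subset_sdiff le_rfl Finset.subset_union_left
  · intro hsub
    have h1 : u ∈ (univ : Finset V) \ D := by simp [hu2]
    have h2 := hsub h1
    simp only [mem_sdiff, mem_univ, true_and, Finset.mem_union] at h2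
    exact h2 (Or.inr hu)

/-- Optimal number of moves in the total domination game on `G` with the vertices of `D`
already totally dominated; `turn = true` means Dominator (the minimizer) moves next,
`turn = false` means Staller (the maximizer) moves next.  The game ends when no legal
move remains (for graphs without isolated vertices this means every vertex is totally
dominated). -/
noncomputable def gtVal (G : SimpleGraph V) (turn : Bool) (D : Finset V) : ℕ :=
  if h : (movesF G D).Nonempty then
    if turn then
      1 + ((movesF G D).attach.inf' (by simpa using h)
        fun v => gtVal G false (D ∪ nbr G v.1))
    else
      1 + ((movesF G D).attach.sup' (by simpa using h)
        fun v => gtVal G true (D ∪ nbr G v.1))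
  else 0
termination_by ((univ : Finset V) \ D).card
decreasing_by
  · exact movesF_card G D v.2
  · exact movesF_card G D v.2

/-- The game total domination number `γ_g^t(G|D)` (Dominator-start, `D` predominated). -/
noncomputable def gtD (G : SimpleGraph V) (D : Finset V := ∅) : ℕ := gtVal G true D

/-- The Staller-start game total domination number `γ_g^t'(G|D)`. -/
noncomputable def gtS (G : SimpleGraph V) (D : Finset V := ∅) : ℕ := gtVal G false D

/-- `G` has no isolated vertices. -/
def NoIsolated (G : SimpleGraph V) : Prop := ∀ v : V, ∃ w, G.Adj v w

/-!
Dominator opens with a neighbour `w` of `v`. By the continuation principle (predominating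
more vertices never lengthens the game, whoever starts), the remaining Staller-start game on
`nbr G w ∋ v` lasts at most as long as the one on `{v}`, and a Staller-start game exceeds the
Dominator-start game on the same position by at most one move. Hence
`γ_g^t(G) ≤ 1 + γ_g^t'(G|N(w)) ≤ 1 + γ_g^t'(G|v) ≤ 2 + γ_g^t(G|v)`.
-/

section

variable {G : SimpleGraph V} {D : Finset V}

lemma mem_nbr {v w : V} : w ∈ nbr G v ↔ G.Adj v w := by
  simp [nbr]

lemma mem_movesF {v : V} : v ∈ movesF G D ↔ ¬ nbr G v ⊆ D := by
  simp [movesF]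

lemma movesF_anti {D' : Finset V} (h : D ⊆ D') : movesF G D' ⊆ movesF G D := fun _ hs =>
  mem_movesF.2 fun hsub => mem_movesF.1 hs (hsub.trans h)

lemma gtVal_eq_zero (h : ¬ (movesF G D).Nonempty) (t : Bool) : gtVal G t D = 0 := by
  rw [gtVal, dif_neg h]

lemma gtVal_true_le {s : V} (hs : s ∈ movesF G D) :
    gtVal G true D ≤ 1 + gtVal G false (D ∪ nbr G s) := by
  rw [gtVal, dif_pos ⟨s, hs⟩, if_pos rfl]
  exact Nat.add_le_add_left (inf'_le _ (mem_attach _ ⟨s, hs⟩)) 1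

lemma le_gtVal_false {s : V} (hs : s ∈ movesF G D) :
    1 + gtVal G true (D ∪ nbr G s) ≤ gtVal G false D := by
  rw [gtVal.eq_1 G false D, dif_pos ⟨s, hs⟩, if_neg Bool.false_ne_true]
  exact Nat.add_le_add_left (le_sup' (fun v : movesF G D => gtVal G true (D ∪ nbr G v.1))
    (mem_attach _ ⟨s, hs⟩)) 1

lemma exists_gtVal_true_eq (h : (movesF G D).Nonempty) :
    ∃ m ∈ movesF G D, gtVal G true D = 1 + gtVal G false (D ∪ nbr G m) := by
  obtain ⟨⟨m, hm⟩, -, hmin⟩ := exists_mem_eq_inf' (s := (movesF G D).attach)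
    (by simpa using h) fun v => gtVal G false (D ∪ nbr G v.1)
  exact ⟨m, hm, by rw [gtVal, dif_pos h, if_pos rfl, hmin]⟩

lemma exists_gtVal_false_eq (h : (movesF G D).Nonempty) :
    ∃ m ∈ movesF G D, gtVal G false D = 1 + gtVal G true (D ∪ nbr G m) := by
  obtain ⟨⟨m, hm⟩, -, hmax⟩ := exists_mem_eq_sup' (s := (movesF G D).attach)
    (by simpa using h) fun v => gtVal G true (D ∪ nbr G v.1)
  exact ⟨m, hm, by rw [gtVal, dif_pos h, if_neg Bool.false_ne_true, hmax]⟩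

end

/-- Continuation principle. If Dominator's optimal move `m` on `D` is no longer legal on `D'`,
then `nbr G m ⊆ D'`, so any legal move on `D'` reaches a superset of `D ∪ nbr G m`. -/
theorem gtVal_anti (G : SimpleGraph V) (t : Bool) {D D' : Finset V} (h : D ⊆ D') :
    gtVal G t D' ≤ gtVal G t D := by
  by_cases hne' : (movesF G D').Nonempty
  swap
  · rw [gtVal_eq_zero hne']
    exact Nat.zero_le _
  cases t with
  | true =>
    obtain ⟨m, hm, hDm⟩ := exists_gtVal_true_eq (hne'.mono (movesF_anti h))
    have hdec := movesF_card G D hm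
    obtain ⟨s, hs, hsub⟩ : ∃ s ∈ movesF G D', D ∪ nbr G m ⊆ D' ∪ nbr G s := by
      by_cases hm' : m ∈ movesF G D'
      · exact ⟨m, hm', union_subset_union h le_rfl⟩
      · obtain ⟨s, hs⟩ := hne'
        refine ⟨s, hs, (union_subset h ?_).trans subset_union_left⟩
        simpa [mem_movesF] using hm'
    calc gtVal G true D' ≤ 1 + gtVal G false (D' ∪ nbr G s) := gtVal_true_le hs
      _ ≤ 1 + gtVal G false (D ∪ nbr G m) :=
        Nat.add_le_add_left (gtVal_anti G false hsub) 1
      _ = gtVal G true D := hDm.symm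
  | false =>
    obtain ⟨s, hs, hD's⟩ := exists_gtVal_false_eq hne'
    have hsD := movesF_anti h hs
    have hdec := movesF_card G D hsD
    calc gtVal G false D' = 1 + gtVal G true (D' ∪ nbr G s) := hD's
      _ ≤ 1 + gtVal G true (D ∪ nbr G s) :=
        Nat.add_le_add_left (gtVal_anti G true (union_subset_union h le_rfl)) 1
      _ ≤ gtVal G false D := le_gtVal_false hsD
termination_by ((univ : Finset V) \ D).card

theorem gtVal_false_le_succ (G : SimpleGraph V) (D : Finset V) :
    gtVal G false D ≤ 1 + gtVal G true D := by
  by_cases hne : (movesF G D).Nonempty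
  · obtain ⟨s, -, hs⟩ := exists_gtVal_false_eq hne
    rw [hs]
    exact Nat.add_le_add_left (gtVal_anti G true subset_union_left) 1
  · rw [gtVal_eq_zero hne]
    exact Nat.zero_le _

/-- For every graph `G` (without isolated vertices) and every vertex `v`,
`γ_g^t(G|v) ≥ γ_g^t(G) − 2`. -/
theorem gtD_predominate_ge {V : Type*} [Fintype V] (G : SimpleGraph V)
    (hG : NoIsolated G) (v : V) :
    gtD G ∅ - 2 ≤ gtD G {v} := by
  obtain ⟨w, hvw⟩ := hG v
  have hv : v ∈ nbr G w := mem_nbr.2 hvw.symm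
  have hw : w ∈ movesF G ∅ := mem_movesF.2 fun h => by simpa using h hv
  have hfirst : gtVal G true ∅ ≤ 1 + gtVal G false (nbr G w) := by
    simpa using gtVal_true_le hw
  have hcont : gtVal G false (nbr G w) ≤ gtVal G false {v} :=
    gtVal_anti G false (singleton_subset_iff.2 hv)
  have hswap := gtVal_false_le_succ G {v}
  unfold gtD
  omega
end

section
/- For every cycle C_n with n ≥ 3, the variant of the total domination game in which Staller makes the first two moves and then the players alternate (moves s₁, s₂, d₁, s₃, d₂, …) has the same optimal length as the ordinary Dominator-start game, i.e., γ_g^t''(C_n) = γ_g^t(C_n). -/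
open Finset

open scoped Classical

variable {V : Type*} [Fintype V]

/-- The cycle graph `C_n` on vertex set `ZMod n` (a genuine cycle for `n ≥ 3`):
`x` is adjacent to `x + 1` and `x - 1`. -/
def cycleG (n : ℕ) : SimpleGraph (ZMod n) :=
  SimpleGraph.fromRel (fun x y => x + 1 = y)

/-- Optimal length `γ_g^t''(G)` of the variant of the total domination game in which
Staller makes the first two moves and thereafter the players alternate starting with
Dominator (moves `s₁, s₂, d₁, s₃, d₂, …`): Staller (maximizer) makes one move and the
rest of the game is a Staller-start game. -/
noncomputable def gtSS (G : SimpleGraph V) : ℕ :=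
  if h : (movesF G (∅ : Finset V)).Nonempty then
    1 + ((movesF G (∅ : Finset V)).attach.sup' (by simpa using h)
      fun v => gtVal G false ((∅ : Finset V) ∪ nbr G v.1))
  else 0

section Aux

set_option linter.unusedSectionVars false

lemma sup'_attach_eq (s : Finset V) (h : s.Nonempty) (f : V → ℕ) :
    (s.attach.sup' (by simpa using h) fun v => f v.1) = s.sup' h f := by
  apply le_antisymm
  · exact Finset.sup'_le _ _ fun v _ => Finset.le_sup' f v.2
  · exact Finset.sup'_le _ _ fun v hv =>
      Finset.le_sup' (f := fun w : {x // x ∈ s} => f w.1) (Finset.mem_attach s ⟨v, hv⟩)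

lemma inf'_attach_eq (s : Finset V) (h : s.Nonempty) (f : V → ℕ) :
    (s.attach.inf' (by simpa using h) fun v => f v.1) = s.inf' h f := by
  apply le_antisymm
  · exact Finset.le_inf' _ _ fun v hv =>
      Finset.inf'_le (fun w : {x // x ∈ s} => f w.1) (Finset.mem_attach s ⟨v, hv⟩)
  · exact Finset.le_inf' _ _ fun v _ => Finset.inf'_le f v.2

lemma nbr_image (G : SimpleGraph V) (σ : V ≃ V)
    (hσ : ∀ x y, G.Adj (σ x) (σ y) ↔ G.Adj x y) (v : V) :
    nbr G (σ v) = (nbr G v).image σ := by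
  ext u
  simp only [nbr, mem_filter, mem_univ, true_and, Finset.mem_image]
  constructor
  · intro h
    refine ⟨σ.symm u, (hσ v (σ.symm u)).mp ?_, σ.apply_symm_apply u⟩
    simpa using h
  · rintro ⟨w, hw, rfl⟩
    exact (hσ v w).mpr hw

lemma movesF_image (G : SimpleGraph V) (σ : V ≃ V)
    (hσ : ∀ x y, G.Adj (σ x) (σ y) ↔ G.Adj x y) (D : Finset V) :
    movesF G (D.image σ) = (movesF G D).image σ := by
  ext u
  obtain ⟨w, rfl⟩ := σ.surjective u
  simp only [movesF, mem_filter, mem_univ, true_and, Finset.mem_image]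
  rw [nbr_image G σ hσ, Finset.image_subset_image_iff σ.injective]
  constructor
  · intro h; exact ⟨w, h, rfl⟩
  · rintro ⟨x, hx, hxw⟩
    rwa [σ.injective hxw] at hx

lemma gtVal_image (G : SimpleGraph V) (σ : V ≃ V)
    (hσ : ∀ x y, G.Adj (σ x) (σ y) ↔ G.Adj x y) (t : Bool) (D : Finset V) :
    gtVal G t (D.image σ) = gtVal G t D := by
  conv_lhs => rw [gtVal]
  conv_rhs => rw [gtVal]
  have hmov := movesF_image G σ hσ D
  by_cases h : (movesF G D).Nonempty
  · have h' : (movesF G (D.image σ)).Nonempty := by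
      rw [hmov]; exact h.image σ
    rw [dif_pos h', dif_pos h]
    cases t
    · simp only [Bool.false_eq_true, if_false]
      congr 1
      rw [sup'_attach_eq _ h' (fun v => gtVal G true (D.image σ ∪ nbr G v)),
          sup'_attach_eq _ h (fun v => gtVal G true (D ∪ nbr G v))]
      calc (movesF G (D.image σ)).sup' h' (fun v => gtVal G true (D.image σ ∪ nbr G v))
          = ((movesF G D).image σ).sup' (hmov ▸ h')
              (fun v => gtVal G true (D.image σ ∪ nbr G v)) :=
            Finset.sup'_congr h' hmov fun _ _ => rfl
        _ = (movesF G D).sup' ((hmov ▸ h').of_image)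
              ((fun v => gtVal G true (D.image σ ∪ nbr G v)) ∘ σ) :=
            Finset.sup'_image _ _
        _ = (movesF G D).sup' h (fun v => gtVal G true (D ∪ nbr G v)) := by
            refine Finset.sup'_congr _ rfl fun v hv => ?_
            show gtVal G true (D.image σ ∪ nbr G (σ v)) = gtVal G true (D ∪ nbr G v)
            rw [nbr_image G σ hσ, ← Finset.image_union]
            exact gtVal_image G σ hσ true (D ∪ nbr G v)
    · simp only [if_true]
      congr 1
      rw [inf'_attach_eq _ h' (fun v => gtVal G false (D.image σ ∪ nbr G v)),
          inf'_attach_eq _ h (fun v => gtVal G false (D ∪ nbr G v))]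
      calc (movesF G (D.image σ)).inf' h' (fun v => gtVal G false (D.image σ ∪ nbr G v))
          = ((movesF G D).image σ).inf' (hmov ▸ h')
              (fun v => gtVal G false (D.image σ ∪ nbr G v)) :=
            Finset.inf'_congr h' hmov fun _ _ => rfl
        _ = (movesF G D).inf' ((hmov ▸ h').of_image)
              ((fun v => gtVal G false (D.image σ ∪ nbr G v)) ∘ σ) :=
            Finset.inf'_image _ _
        _ = (movesF G D).inf' h (fun v => gtVal G false (D ∪ nbr G v)) := by
            refine Finset.inf'_congr _ rfl fun v hv => ?_
            show gtVal G false (D.image σ ∪ nbr G (σ v)) = gtVal G false (D ∪ nbr G v)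
            rw [nbr_image G σ hσ, ← Finset.image_union]
            exact gtVal_image G σ hσ false (D ∪ nbr G v)
  · have h' : ¬ (movesF G (D.image σ)).Nonempty := by
      rw [hmov]; simpa [Finset.image_nonempty] using h
    rw [dif_neg h', dif_neg h]
termination_by ((univ : Finset V) \ D).card
decreasing_by
  · exact movesF_card G D hv
  · exact movesF_card G D hv

end Aux

lemma cycle_adj_shift (n : ℕ) (a x y : ZMod n) :
    (cycleG n).Adj (x + a) (y + a) ↔ (cycleG n).Adj x y := by
  have key : ∀ u v : ZMod n, u + a + 1 = v + a ↔ u + 1 = v := by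
    intro u v
    rw [add_right_comm, add_left_inj]
  simp only [cycleG, SimpleGraph.fromRel_adj, ne_eq, add_left_inj, key]

lemma gtVal_nbr_const (n : ℕ) [NeZero n] (v : ZMod n) :
    gtVal (cycleG n) false (nbr (cycleG n) v) = gtVal (cycleG n) false (nbr (cycleG n) 0) := by
  have hσ : ∀ x y, (cycleG n).Adj (Equiv.addRight v x) (Equiv.addRight v y)
      ↔ (cycleG n).Adj x y := by
    intro x y
    simpa using cycle_adj_shift n v x y
  have h0 : (Equiv.addRight v) (0 : ZMod n) = v := by simp
  have h := gtVal_image (cycleG n) (Equiv.addRight v) hσ false (nbr (cycleG n) 0)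
  rw [← nbr_image _ _ hσ, h0] at h
  exact h

/-- For every cycle `C_n`, `n ≥ 3`, `γ_g^t''(C_n) = γ_g^t(C_n)`. -/
theorem gtSS_cycle (n : ℕ) [NeZero n] (hn : 3 ≤ n) :
    gtSS (cycleG n) = gtD (cycleG n) := by
  haveI : Fact (1 < n) := ⟨by omega⟩
  have hone : (0 : ZMod n) ≠ 1 := zero_ne_one
  have hadj : (cycleG n).Adj 0 1 := by
    simp [cycleG, SimpleGraph.fromRel_adj, hone]
  have hne : (movesF (cycleG n) (∅ : Finset (ZMod n))).Nonempty := by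
    refine ⟨0, ?_⟩
    simp only [movesF, mem_filter, mem_univ, true_and]
    intro hsub
    have h1 : (1 : ZMod n) ∈ nbr (cycleG n) 0 := by
      simp [nbr, hadj]
    simpa using hsub h1
  rw [gtSS, gtD]
  conv_rhs => rw [gtVal]
  rw [dif_pos hne, dif_pos hne, if_pos rfl]
  congr 1
  simp only [Finset.empty_union]
  apply le_antisymm
  · refine Finset.sup'_le _ _ fun v hv => Finset.le_inf' _ _ fun w hw => ?_
    rw [gtVal_nbr_const n v.1, ← gtVal_nbr_const n w.1]
  · obtain ⟨v, hv⟩ := Finset.attach_nonempty_iff.mpr hne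
    exact le_trans (Finset.inf'_le _ hv)
      (Finset.le_sup' (fun x => gtVal (cycleG n) false (nbr (cycleG n) x.1)) hv)
end

section
/- Let A be a nonempty proper subset of the vertices of the cycle C_n consisting of the currently totally dominated vertices. If A contains a run (a maximal set of at least two consecutive totally dominated vertices) or an anti-run (a maximal set of at least two consecutive non-totally-dominated vertices), then there exists a legal move (a vertex with at least one neighbor outside A) whose play totally dominates exactly one vertex not in A. If A contains neither a run nor an anti-run, then (A, V(C_n)∖A) is a bipartition of C_n into the two alternating classes, and every legal move totally dominates exactly two vertices not in A. -/
open Finset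

open scoped Classical

variable {V : Type*} [Fintype V]

/-! Walking around the cycle from a run (anti-run) we must leave `A` (its complement),
and the vertex just before the exit has one neighbor in the run and one outside it. Without
runs and anti-runs membership in `A` alternates, so the two neighbors `v ± 1` of any vertex
are both in `A` or both outside it. -/

namespace Finset

variable {α : Type*} [DecidableEq α] {a b : α} {s : Finset α}

lemma card_pair_sdiff_eq_one (h : a ∈ s ↔ b ∉ s) : ({a, b} \ s).card = 1 := by
  by_cases ha : a ∈ s
  · exact card_eq_one.mpr ⟨b, by ext c; grind⟩
  · exact card_eq_one.mpr ⟨a, by ext c; grind⟩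

lemma card_pair_sdiff_eq_two (hab : a ≠ b) (ha : a ∉ s) (hb : b ∉ s) :
    ({a, b} \ s).card = 2 := by
  rw [sdiff_eq_self_of_disjoint (by simp [ha, hb]), card_pair hab]

end Finset

namespace ZMod

variable {n : ℕ} [NeZero n]

lemma exists_and_not_add_one {P : ZMod n → Prop} {x y : ZMod n} (hx : P x) (hy : ¬ P y) :
    ∃ v, P v ∧ ¬ P (v + 1) := by
  by_contra! hstep
  have hP : ∀ k : ℕ, P (x + k) := by
    intro k
    induction k with
    | zero => simpa using hx
    | succ k ih => simpa [add_assoc] using hstep _ ih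
  exact hy (by simpa using hP (y - x).val)

lemma exists_sub_one_and_not_add_one {P : ZMod n → Prop} {x y : ZMod n} (hx : P x)
    (hx' : P (x + 1)) (hy : ¬ P y) : ∃ v, P (v - 1) ∧ ¬ P (v + 1) := by
  obtain ⟨u, ⟨hu, hu'⟩, hexit⟩ :=
    exists_and_not_add_one (P := fun v => P v ∧ P (v + 1)) ⟨hx, hx'⟩ (fun h => hy h.1)
  exact ⟨u + 1, by simpa using hu, fun h => hexit ⟨hu', h⟩⟩

end ZMod

lemma nbr_cycleG {n : ℕ} [NeZero n] (hn : 1 < n) (v : ZMod n) :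
    nbr (cycleG n) v = {v + 1, v - 1} := by
  have : Fact (1 < n) := ⟨hn⟩
  ext w
  rw [nbr, mem_filter]
  simp only [cycleG, mem_univ, true_and, SimpleGraph.fromRel_adj, mem_insert, mem_singleton]
  constructor
  · rintro ⟨-, rfl | rfl⟩
    · exact Or.inl rfl
    · exact Or.inr (by ring)
  · rintro (rfl | rfl)
    · exact ⟨by simp, Or.inl rfl⟩
    · exact ⟨by simp [eq_sub_iff_add_eq], Or.inr (by ring)⟩

lemma ZMod.add_one_ne_sub_one {n : ℕ} (hn : 3 ≤ n) (v : ZMod n) : v + 1 ≠ v - 1 := by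
  intro h
  have h2 : ((2 : ℕ) : ZMod n) = 0 := by
    push_cast
    linear_combination h
  rw [ZMod.natCast_eq_zero_iff] at h2
  exact absurd (Nat.le_of_dvd two_pos h2) (by omega)

/-- Let `A` be a nonempty proper subset of the vertices of the cycle
`C_n` (`n ≥ 3`), the currently totally dominated vertices.  If `A` contains a run (two
cyclically consecutive vertices in `A`) or an anti-run (two cyclically consecutive
vertices outside `A`), then there is a legal move (a vertex with a neighbor outside `A`)
totally dominating exactly one vertex not in `A`.  If `A` contains neither a run nor an
anti-run, then `A` and its complement alternate around the cycle (a bipartition), and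
every legal move totally dominates exactly two vertices not in `A`. -/
theorem cycle_run_antirun (n : ℕ) [NeZero n] (hn3 : 3 ≤ n) (A : Finset (ZMod n))
    (hA : A.Nonempty) (hA' : A ≠ Finset.univ) :
    (((∃ x : ZMod n, x ∈ A ∧ x + 1 ∈ A) ∨ (∃ x : ZMod n, x ∉ A ∧ x + 1 ∉ A)) →
      ∃ v : ZMod n, ¬ nbr (cycleG n) v ⊆ A ∧ (nbr (cycleG n) v \ A).card = 1) ∧
    ((¬ (∃ x : ZMod n, x ∈ A ∧ x + 1 ∈ A)) ∧ (¬ (∃ x : ZMod n, x ∉ A ∧ x + 1 ∉ A)) →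
      (∀ x : ZMod n, x ∈ A ↔ x + 1 ∉ A) ∧
      (∀ v : ZMod n, ¬ nbr (cycleG n) v ⊆ A → (nbr (cycleG n) v \ A).card = 2)) := by
  simp only [nbr_cycleG (by omega : 1 < n)]
  refine ⟨fun hrun => ?_, fun ⟨hnr, hna⟩ => ?_⟩
  · obtain ⟨v, hv⟩ : ∃ v : ZMod n, (v + 1 ∈ A ↔ v - 1 ∉ A) := by
      rcases hrun with ⟨x, hx, hx'⟩ | ⟨x, hx, hx'⟩
      · obtain ⟨y, hy⟩ := not_forall.mp fun h => hA' (eq_univ_of_forall h)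
        obtain ⟨v, hv, hv'⟩ := ZMod.exists_sub_one_and_not_add_one hx hx' hy
        exact ⟨v, by tauto⟩
      · obtain ⟨y, hy⟩ := hA
        obtain ⟨v, hv, hv'⟩ :=
          ZMod.exists_sub_one_and_not_add_one (P := (· ∉ A)) hx hx' (not_not.mpr hy)
        exact ⟨v, by tauto⟩
    have hcard := card_pair_sdiff_eq_one hv
    exact ⟨v, sdiff_nonempty.mp (card_pos.mp (by omega)), hcard⟩
  · have halt : ∀ x : ZMod n, x ∈ A ↔ x + 1 ∉ A := fun x =>
      ⟨fun hx hx' => hnr ⟨x, hx, hx'⟩, fun hx' => not_not.mp fun hx => hna ⟨x, hx, hx'⟩⟩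
    refine ⟨halt, fun v hv => ?_⟩
    have hsym : v + 1 ∈ A ↔ v - 1 ∈ A := by
      have := halt (v - 1)
      rw [sub_add_cancel] at this
      rw [this, halt v, not_not]
    have hout : v + 1 ∉ A ∧ v - 1 ∉ A := by
      rw [hsym, and_self]
      exact fun h => hv (insert_subset (hsym.mpr h) (singleton_subset_iff.mpr h))
    exact card_pair_sdiff_eq_two (ZMod.add_one_ne_sub_one hn3 v) hout.1 hout.2
end
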